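/- arXiv:2503.20094 — 6 statements merged into one kernel-verified Lean document; each statement's English description precedes it below -/
import Mathlib

section
/- If κ is a regular uncountable cardinal and 𝒜 is a family of club subsets of κ such that no club C satisfies C ⊆* A for all A ∈ 𝒜 (i.e. 𝒜 is unbounded in (Cub_κ, ⊇*)), then the family of increasing enumerations {f_A : A ∈ 𝒜} is unbounded in (κ^κ, ≤*). -/
open Cardinal Set

namespace PaperFormal

/-- `A` is unbounded in `κ` (as a set of ordinals below `κ`). -/
def UnboundedIn (κ : Ordinal.{0}) (A : Set Ordinal) : Prop :=
  ∀ α < κ, ∃ β ∈ A, α ≤ β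

/-- `A ⊆* B`: almost inclusion (mod bounded) below `κ`. -/
def AlmostSub (κ : Ordinal.{0}) (A B : Set Ordinal) : Prop :=
  ∃ α < κ, ∀ β ∈ A, α ≤ β → β ∈ B

/-- `C` is closed in `κ`. -/
def ClosedIn (κ : Ordinal.{0}) (C : Set Ordinal) : Prop :=
  ∀ α, α < κ → α ≠ 0 → (∀ β < α, (C ∩ Set.Ioo β α).Nonempty) → α ∈ C

/-- `C` is a club (closed unbounded set) in `κ`. -/
def IsClub (κ : Ordinal.{0}) (C : Set Ordinal) : Prop :=
  C ⊆ Set.Iio κ ∧ UnboundedIn κ C ∧ ClosedIn κ C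

/-- `f` maps `κ` into `κ`. -/
def FunOn (κ : Ordinal.{0}) (f : Ordinal → Ordinal) : Prop :=
  ∀ β < κ, f β < κ

/-- almost everywhere domination `f ≤* g` on `κ`. -/
def LeStar (κ : Ordinal.{0}) (f g : Ordinal → Ordinal) : Prop :=
  ∃ α < κ, ∀ β, α ≤ β → β < κ → f β ≤ g β

def UnboundedFunFam (κ : Ordinal.{0}) (𝒜 : Set (Ordinal → Ordinal)) : Prop :=
  (∀ f ∈ 𝒜, FunOn κ f) ∧ ∀ g, FunOn κ g → ∃ f ∈ 𝒜, ¬ LeStar κ f g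

def DominatingFunFam (κ : Ordinal.{0}) (𝒜 : Set (Ordinal → Ordinal)) : Prop :=
  (∀ f ∈ 𝒜, FunOn κ f) ∧ ∀ g, FunOn κ g → ∃ f ∈ 𝒜, LeStar κ g f

/-- the generalized bounding number `𝔟_κ`. -/
noncomputable def bNum (κ : Ordinal.{0}) : Cardinal :=
  sInf { μ : Cardinal.{0} | ∃ 𝒜, UnboundedFunFam κ 𝒜 ∧ #𝒜 = Cardinal.lift.{1} μ }

/-- the generalized dominating number `𝔡_κ`. -/
noncomputable def dNum (κ : Ordinal.{0}) : Cardinal :=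
  sInf { μ : Cardinal.{0} | ∃ 𝒜, DominatingFunFam κ 𝒜 ∧ #𝒜 = Cardinal.lift.{1} μ }

/-- a (proper) filter on `κ`. -/
structure IsKFilter (κ : Ordinal.{0}) (F : Set (Set Ordinal)) : Prop where
  subset : ∀ A ∈ F, A ⊆ Set.Iio κ
  univ_mem : Set.Iio κ ∈ F
  upward : ∀ A ∈ F, ∀ B, B ⊆ Set.Iio κ → A ⊆ B → B ∈ F
  inter : ∀ A ∈ F, ∀ B ∈ F, A ∩ B ∈ F
  proper : ∅ ∉ F

/-- an ultrafilter on `κ`. -/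
structure IsKUltrafilter (κ : Ordinal.{0}) (U : Set (Set Ordinal)) extends IsKFilter κ U : Prop where
  decide : ∀ A, A ⊆ Set.Iio κ → A ∈ U ∨ (Set.Iio κ \ A) ∈ U

/-- uniformity: every member is unbounded (equivalently, for regular `κ`, of size `κ`). -/
def Uniform (κ : Ordinal.{0}) (F : Set (Set Ordinal)) : Prop :=
  ∀ A ∈ F, UnboundedIn κ A

/-- `κ`-completeness. -/
def KComplete (κ : Ordinal.{0}) (F : Set (Set Ordinal)) : Prop :=
  ∀ s : Set (Set Ordinal), s ⊆ F → s.Nonempty → #s < Cardinal.lift.{1} κ.card → ⋂₀ s ∈ F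

/-- closure under diagonal intersections. -/
def DiagClosed (κ : Ordinal.{0}) (F : Set (Set Ordinal)) : Prop :=
  ∀ A : Ordinal → Set Ordinal, (∀ i < κ, A i ∈ F) →
    {β | β < κ ∧ ∀ i < β, β ∈ A i} ∈ F

/-- a normal ultrafilter on `κ`: `κ`-complete, contains all clubs, closed under
diagonal intersections. -/
def NormalUF (κ : Ordinal.{0}) (U : Set (Set Ordinal)) : Prop :=
  IsKUltrafilter κ U ∧ Uniform κ U ∧ KComplete κ U ∧
    (∀ C, IsClub κ C → C ∈ U) ∧ DiagClosed κ U

/-- `ℬ` is a `⊆*`-base for `F`. -/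
def IsBase (κ : Ordinal.{0}) (F ℬ : Set (Set Ordinal)) : Prop :=
  ℬ ⊆ F ∧ ∀ A ∈ F, ∃ B ∈ ℬ, AlmostSub κ B A

/-- the character of a filter. -/
noncomputable def chNum (κ : Ordinal.{0}) (F : Set (Set Ordinal)) : Cardinal :=
  sInf { μ : Cardinal.{0} | ∃ ℬ, IsBase κ F ℬ ∧ #ℬ = Cardinal.lift.{1} μ }

/-- there is a `⊆*`-decreasing `λ`-sequence in `F` with no `⊆*`-lower bound in `F`. -/
def HasTower (κ : Ordinal.{0}) (F : Set (Set Ordinal)) (lam : Cardinal) : Prop :=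
  ∃ S : Ordinal → Set Ordinal, (∀ i < lam.ord, S i ∈ F) ∧
    (∀ i j, i < j → j < lam.ord → AlmostSub κ (S j) (S i)) ∧
    ¬ ∃ Y ∈ F, ∀ i < lam.ord, AlmostSub κ Y (S i)

/-- the depth `𝔱(F)` of a filter. -/
noncomputable def tNum (κ : Ordinal.{0}) (F : Set (Set Ordinal)) : Cardinal :=
  sInf { μ : Cardinal.{0} | μ.IsRegular ∧ HasTower κ F μ }

/-- the ultrafilter number `𝔲_κ`. -/
noncomputable def uNum (κ : Ordinal.{0}) : Cardinal :=
  sInf { μ : Cardinal.{0} | ∃ U, IsKUltrafilter κ U ∧ Uniform κ U ∧ chNum κ U = μ }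

/-- the complete ultrafilter number `𝔲^com_κ`. -/
noncomputable def uComNum (κ : Ordinal.{0}) : Cardinal :=
  sInf { μ : Cardinal.{0} | ∃ U, IsKUltrafilter κ U ∧ Uniform κ U ∧ KComplete κ U ∧ chNum κ U = μ }

/-- `U` is a simple `P_λ`-point: a uniform ultrafilter with a `⊆*`-decreasing
generating sequence of length `λ`. -/
def SimplePPoint (κ : Ordinal.{0}) (lam : Cardinal) (U : Set (Set Ordinal)) : Prop :=
  IsKUltrafilter κ U ∧ Uniform κ U ∧
    ∃ S : Ordinal → Set Ordinal, (∀ i < lam.ord, S i ∈ U) ∧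
      (∀ i j, i < j → j < lam.ord → AlmostSub κ (S j) (S i)) ∧
      ∀ A ∈ U, ∃ i < lam.ord, AlmostSub κ (S i) A

/-- a `⊆*`-decreasing generating sequence of length `λ` for a filter `F`. -/
def SimplePFilter (κ : Ordinal.{0}) (lam : Cardinal) (F : Set (Set Ordinal)) : Prop :=
  ∃ S : Ordinal → Set Ordinal, (∀ i < lam.ord, S i ∈ F) ∧
    (∀ i j, i < j → j < lam.ord → AlmostSub κ (S j) (S i)) ∧
    ∀ A ∈ F, ∃ i < lam.ord, AlmostSub κ (S i) A

/-- `ℬ` is a `π`-base for `U`: unbounded sets, almost contained in members of `U`. -/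
def IsPiBase (κ : Ordinal.{0}) (U ℬ : Set (Set Ordinal)) : Prop :=
  (∀ B ∈ ℬ, B ⊆ Set.Iio κ ∧ UnboundedIn κ B) ∧ ∀ A ∈ U, ∃ B ∈ ℬ, AlmostSub κ B A

/-- the `π`-character `πch(U)`. -/
noncomputable def piChNum (κ : Ordinal.{0}) (U : Set (Set Ordinal)) : Cardinal :=
  sInf { μ : Cardinal.{0} | ∃ ℬ, IsPiBase κ U ℬ ∧ #ℬ = Cardinal.lift.{1} μ }

/-- `Y` is a pseudo-intersection of the family `𝒜`. -/
def IsPseudoInter (κ : Ordinal.{0}) (𝒜 : Set (Set Ordinal)) (Y : Set Ordinal) : Prop :=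
  Y ⊆ Set.Iio κ ∧ UnboundedIn κ Y ∧ ∀ A ∈ 𝒜, AlmostSub κ Y A

/-- `π𝔭(U)`: the least size of a subfamily of `U` with no pseudo-intersection. -/
noncomputable def piPNum (κ : Ordinal.{0}) (U : Set (Set Ordinal)) : Cardinal :=
  sInf { μ : Cardinal.{0} | ∃ 𝒜, 𝒜 ⊆ U ∧ #𝒜 = Cardinal.lift.{1} μ ∧ ¬ ∃ Y, IsPseudoInter κ 𝒜 Y }

/-- a `⊆*`-decreasing `λ`-sequence in `U` unbounded in `([κ]^κ, ⊇*)`. -/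
def HasPiTower (κ : Ordinal.{0}) (U : Set (Set Ordinal)) (lam : Cardinal) : Prop :=
  ∃ S : Ordinal → Set Ordinal, (∀ i < lam.ord, S i ∈ U) ∧
    (∀ i j, i < j → j < lam.ord → AlmostSub κ (S j) (S i)) ∧
    ¬ ∃ Y, Y ⊆ Set.Iio κ ∧ UnboundedIn κ Y ∧ ∀ i < lam.ord, AlmostSub κ Y (S i)

/-- `π𝔱(U)`. -/
noncomputable def piTNum (κ : Ordinal.{0}) (U : Set (Set Ordinal)) : Cardinal :=
  sInf { μ : Cardinal.{0} | μ.IsRegular ∧ HasPiTower κ U μ }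

/-- `A` splits `B`. -/
def Splits (κ : Ordinal.{0}) (A B : Set Ordinal) : Prop :=
  UnboundedIn κ (B ∩ A) ∧ UnboundedIn κ (B \ A)

/-- the splitting number `𝔰_κ`. -/
noncomputable def sNum (κ : Ordinal.{0}) : Cardinal :=
  sInf { μ : Cardinal.{0} | ∃ 𝒜 : Set (Set Ordinal), (∀ A ∈ 𝒜, A ⊆ Set.Iio κ) ∧
    (∀ X, X ⊆ Set.Iio κ → UnboundedIn κ X → ∃ A ∈ 𝒜, Splits κ A X) ∧ #𝒜 = Cardinal.lift.{1} μ }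

/-- the reaping number `𝔯_κ`. -/
noncomputable def rNum (κ : Ordinal.{0}) : Cardinal :=
  sInf { μ : Cardinal.{0} | ∃ 𝒜 : Set (Set Ordinal), (∀ A ∈ 𝒜, A ⊆ Set.Iio κ ∧ UnboundedIn κ A) ∧
    (¬ ∃ X, X ⊆ Set.Iio κ ∧ ∀ A ∈ 𝒜, Splits κ X A) ∧ #𝒜 = Cardinal.lift.{1} μ }

/-- `f` is almost one-to-one modulo `U`: bounded-to-one on a set in `U`. -/
def AlmostInjMod (κ : Ordinal.{0}) (U : Set (Set Ordinal)) (f : Ordinal → Ordinal) : Prop :=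
  ∃ X ∈ U, ∀ γ < κ, ∃ α < κ, ∀ β ∈ X, f β = γ → β < α

/-- the pushforward `f_*(U)`. -/
def PushFwd (κ : Ordinal.{0}) (f : Ordinal → Ordinal) (U : Set (Set Ordinal)) :
    Set (Set Ordinal) :=
  { A | A ⊆ Set.Iio κ ∧ (Set.Iio κ ∩ f ⁻¹' A) ∈ U }

/-- countable completeness. -/
def CountablyComplete (U : Set (Set Ordinal)) : Prop :=
  ∀ s : Set (Set Ordinal), s ⊆ U → s.Countable → s.Nonempty → ⋂₀ s ∈ U


/-! If `g` dominated every enumeration `e A` from some `α₀` on, take a closure point `δ > α₀` of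
`x ↦ max (g x) x + 1`. Below `δ` the values `e A γ ≤ g γ` are cofinal in `δ` (as `γ ≤ e A γ`), so
`δ ∈ A` by closedness. The closure points form a club, which would then be `⊆*` every `A ∈ 𝒜`. -/

def closurePoints (κ : Ordinal) (h : Ordinal → Ordinal) : Set Ordinal :=
  {α | α < κ ∧ ∀ β < α, h β < α}

theorem closedIn_closurePoints (κ : Ordinal) (h : Ordinal → Ordinal) :
    ClosedIn κ (closurePoints κ h) := by
  refine fun α hα _ hacc ↦ ⟨hα, fun β hβ ↦ ?_⟩
  obtain ⟨γ, hγ, hβγ, hγα⟩ := hacc β hβ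
  exact (hγ.2 β hβγ).trans hγα

theorem iSup_Iio_add_one_lt_ord {κ : Cardinal.{0}} (hκ : κ.IsRegular) {h : Ordinal → Ordinal}
    (hh : FunOn κ.ord h) {p : Ordinal} (hp : p < κ.ord) :
    ⨆ x : Iio p, h x + 1 < κ.ord := by
  refine Ordinal.lift_iSup_add_one_lt_of_lt_cof ?_ fun x ↦ hh x (x.2.trans hp)
  rw [Cardinal.mk_Iio_ordinal, ← Ordinal.lift_cof, hκ.cof_ord, Cardinal.lift_lift, Cardinal.lift_lt]
  exact Cardinal.lt_ord.mp hp

theorem unboundedIn_closurePoints {κ : Cardinal.{0}} (hκ : κ.IsRegular) (hκ₀ : ℵ₀ < κ)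
    {h : Ordinal → Ordinal} (hh : FunOn κ.ord h) : UnboundedIn κ.ord (closurePoints κ.ord h) := by
  set F : Ordinal → Ordinal := fun p ↦ ⨆ x : Iio p, h x + 1
  refine fun α hα ↦ ⟨Ordinal.nfp F α, ⟨?_, fun β hβ ↦ ?_⟩, Ordinal.le_nfp F α⟩
  · exact Cardinal.nfp_lt_ord_of_isRegular hκ hκ₀.ne'
      (fun p hp ↦ iSup_Iio_add_one_lt_ord hκ hh hp) hα
  · obtain ⟨n, hn⟩ := Ordinal.lt_nfp_iff.mp hβ
    calc h β < F (F^[n] α) := Ordinal.lt_iSup_add_one (fun x : Iio _ ↦ h x) ⟨β, hn⟩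
      _ = F^[n + 1] α := (Function.iterate_succ_apply' F n α).symm
      _ ≤ Ordinal.nfp F α := Ordinal.iterate_le_nfp F α (n + 1)

theorem isClub_closurePoints {κ : Cardinal.{0}} (hκ : κ.IsRegular) (hκ₀ : ℵ₀ < κ)
    {h : Ordinal → Ordinal} (hh : FunOn κ.ord h) : IsClub κ.ord (closurePoints κ.ord h) :=
  ⟨fun _ hα ↦ hα.1, unboundedIn_closurePoints hκ hκ₀ hh, closedIn_closurePoints _ h⟩

theorem le_apply_of_strictMonoOn_Iio {α : Type*} [LinearOrder α] [WellFoundedLT α] {f : α → α}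
    {a : α} (hf : StrictMonoOn f (Iio a)) {x : α} (hx : x < a) : x ≤ f x := by
  induction x using WellFoundedLT.induction with
  | _ x ih =>
    by_contra! hfx
    exact (hf (hfx.trans hx) hx hfx).not_ge (ih (f x) hfx (hfx.trans hx))

theorem mem_of_mem_closurePoints {κ : Ordinal} {A : Set Ordinal} (hA : ClosedIn κ A)
    {f g : Ordinal → Ordinal} (hf : StrictMonoOn f (Iio κ)) (hfA : MapsTo f (Iio κ) A)
    {α₀ : Ordinal} (hfg : ∀ β, α₀ ≤ β → β < κ → f β ≤ g β) {δ : Ordinal}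
    (hδ : δ ∈ closurePoints κ fun x ↦ max (g x) x + 1) (hαδ : α₀ < δ) : δ ∈ A := by
  refine hA δ hδ.1 (ne_zero_of_lt hαδ) fun β hβ ↦ ?_
  set γ := max β α₀ + 1
  have hγδ : γ < δ :=
    (add_le_add_left (le_max_right _ _) 1).trans_lt (hδ.2 _ (max_lt hβ hαδ))
  have hγκ : γ < κ := hγδ.trans hδ.1
  have hβγ : β < γ := (le_max_left β α₀).trans_lt (lt_add_one _)
  refine ⟨f γ, hfA hγκ, hβγ.trans_le (le_apply_of_strictMonoOn_Iio hf hγκ), ?_⟩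
  calc f γ ≤ g γ := hfg γ ((le_max_right β α₀).trans (lt_add_one _).le) hγκ
    _ < max (g γ) γ + 1 := (le_max_left _ _).trans_lt (lt_add_one _)
    _ < δ := hδ.2 γ hγδ

theorem almostSub_closurePoints_of_leStar {κ : Ordinal} (hκ : Order.IsSuccLimit κ)
    {A : Set Ordinal} (hA : ClosedIn κ A) {f g : Ordinal → Ordinal}
    (hf : StrictMonoOn f (Iio κ)) (hfA : MapsTo f (Iio κ) A) (hfg : LeStar κ f g) :
    AlmostSub κ (closurePoints κ fun x ↦ max (g x) x + 1) A := by
  obtain ⟨α₀, hα₀, hfg⟩ := hfg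
  refine ⟨α₀ + 1, ?_, fun δ hδ hαδ ↦ mem_of_mem_closurePoints hA hf hfA hfg hδ ?_⟩
  · simpa using hκ.succ_lt hα₀
  · exact (lt_add_one α₀).trans_le hαδ

/-- if `𝒜` is a family of clubs in regular uncountable `κ` with no club
`⊆*`-below all of them, then the increasing enumerations of members of `𝒜`
(characterized as the strictly monotone maps of `Iio κ` onto the given club) form an
unbounded family in `(κ^κ, ≤*)`. -/
theorem stmt0 (κ : Cardinal.{0}) (hreg : κ.IsRegular) (hunc : Cardinal.aleph0 < κ)
    (𝒜 : Set (Set Ordinal)) (hclub : ∀ A ∈ 𝒜, IsClub κ.ord A)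
    (hunb : ¬ ∃ C, IsClub κ.ord C ∧ ∀ A ∈ 𝒜, AlmostSub κ.ord C A)
    (e : Set Ordinal → Ordinal → Ordinal)
    (he : ∀ A ∈ 𝒜, StrictMonoOn (e A) (Set.Iio κ.ord) ∧ e A '' Set.Iio κ.ord = A) :
    ∀ g, FunOn κ.ord g → ∃ A ∈ 𝒜, ¬ LeStar κ.ord (e A) g := by
  intro g hg
  by_contra! hbdd
  have hlim : Order.IsSuccLimit κ.ord := Cardinal.isSuccLimit_ord hreg.aleph0_le
  have hh : FunOn κ.ord fun x ↦ max (g x) x + 1 := fun x hx ↦ by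
    simpa using hlim.succ_lt (max_lt (hg x hx) hx)
  refine hunb ⟨_, isClub_closurePoints hreg hunc hh, fun A hA ↦ ?_⟩
  have hmaps : MapsTo (e A) (Iio κ.ord) A := fun _ hx ↦
    (he A hA).2.subset (mem_image_of_mem _ hx)
  exact almostSub_closurePoints_of_leStar hlim (hclub A hA).2.2 (he A hA).1 hmaps (hbdd A hA)

end PaperFormal
end

section
/- Let κ be a measurable cardinal and U a normal ultrafilter on κ. If ℬ is a base for U (i.e. ℬ ⊆ U and every A ∈ U almost contains some B ∈ ℬ), then the family of closures {cl(B) : B ∈ ℬ} (closure in the order topology, i.e. B together with its limit points below κ) is a base for the club filter Cub_κ under ⊆*. Consequently 𝔡_κ ≤ ch(U), where ch(U) is the minimum cardinality of a base for U. -/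
open Cardinal Set

namespace PaperFormal

/-- the closure of `B` in the order topology below `κ`: `B` together with its limit
points below `κ`. -/
def ClIn (κ : Ordinal.{0}) (B : Set Ordinal) : Set Ordinal :=
  { γ | γ < κ ∧ (γ ∈ B ∨ (γ ≠ 0 ∧ ∀ β < γ, (B ∩ Set.Ioo β γ).Nonempty)) }

/-- `𝔡_κ` as the least size of a family of clubs cofinal in `(Cub_κ, ⊇*)`. -/
noncomputable def dClubNum (κ : Ordinal.{0}) : Cardinal :=
  sInf { μ : Cardinal.{0} | ∃ 𝒜 : Set (Set Ordinal), (∀ A ∈ 𝒜, IsClub κ A) ∧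
    (∀ C, IsClub κ C → ∃ A ∈ 𝒜, AlmostSub κ A C) ∧ #𝒜 = Cardinal.lift.{1} μ }

/-! Every club lies in `U`, so every club `C` almost contains some `B` in the base; since `C`
is closed, it then almost contains `cl(B)` as well, and `cl(B)` is itself a club because
members of `U` are unbounded. Thus `B ↦ cl(B)` maps a base of `U` onto a family of clubs
cofinal in `(Cub_κ, ⊇*)`, and `𝔡_κ ≤ ch(U)`. -/

theorem isClub_clIn {κ : Ordinal.{0}} {B : Set Ordinal} (hB : B ⊆ Set.Iio κ)
    (hunb : UnboundedIn κ B) : IsClub κ (ClIn κ B) := by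
  refine ⟨fun γ hγ => hγ.1, fun α hα => ?_,
    fun α hα hα0 hlim => ⟨hα, .inr ⟨hα0, fun β hβ => ?_⟩⟩⟩
  · obtain ⟨β, hβB, hαβ⟩ := hunb α hα
    exact ⟨β, ⟨hB hβB, .inl hβB⟩, hαβ⟩
  · obtain ⟨γ, ⟨-, hγB | ⟨-, hγlim⟩⟩, hβγ, hγα⟩ := hlim β hβ
    · exact ⟨γ, hγB, hβγ, hγα⟩
    · obtain ⟨x, hxB, hβx, hxγ⟩ := hγlim β hβγ
      exact ⟨x, hxB, hβx, hxγ.trans hγα⟩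

/-- Past the bound `α` witnessing `B ⊆* C`, every limit point of `B` is a limit point of
`B ∩ C`, hence lies in the closed set `C`. -/
theorem AlmostSub.clIn_of_closedIn {κ : Ordinal.{0}} (hκ : Order.IsSuccPrelimit κ)
    {B C : Set Ordinal} (hBC : AlmostSub κ B C) (hC : ClosedIn κ C) :
    AlmostSub κ (ClIn κ B) C := by
  obtain ⟨α, hακ, hαB⟩ := hBC
  refine ⟨Order.succ α, hκ.succ_lt hακ, fun γ ⟨hγκ, hγ⟩ hαγ => ?_⟩
  rw [Order.succ_le_iff] at hαγ
  rcases hγ with hγB | ⟨hγ0, hγlim⟩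
  · exact hαB γ hγB hαγ.le
  · refine hC γ hγκ hγ0 fun β hβ => ?_
    obtain ⟨x, hxB, hx, hxγ⟩ := hγlim (max β α) (max_lt hβ hαγ)
    exact ⟨x, hαB x hxB (le_max_right β α |>.trans hx.le), (le_max_left β α).trans_lt hx, hxγ⟩

theorem IsBase.exists_clIn_almostSub {κ : Ordinal.{0}} (hκ : Order.IsSuccPrelimit κ)
    {F ℬ : Set (Set Ordinal)} (hF : ∀ C, IsClub κ C → C ∈ F) (hℬ : IsBase κ F ℬ)
    {C : Set Ordinal} (hC : IsClub κ C) : ∃ B ∈ ℬ, AlmostSub κ (ClIn κ B) C := by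
  obtain ⟨B, hB, hBC⟩ := hℬ.2 C (hF C hC)
  exact ⟨B, hB, hBC.clIn_of_closedIn hκ hC.2.2⟩

theorem exists_mk_eq_lift_of_subset_Iio {κ : Ordinal.{0}} {𝒜 : Set (Set Ordinal)}
    (h𝒜 : ∀ A ∈ 𝒜, A ⊆ Set.Iio κ) : ∃ μ : Cardinal.{0}, #𝒜 = Cardinal.lift.{1} μ := by
  have h𝒜κ : #𝒜 ≤ Cardinal.lift.{1} (2 ^ κ.card) :=
    calc #𝒜 ≤ #(𝒫 Set.Iio κ) := Cardinal.mk_le_mk_of_subset h𝒜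
      _ = Cardinal.lift.{1} (2 ^ κ.card) := by
        rw [Cardinal.mk_powerset, Cardinal.mk_Iio_ordinal, Cardinal.lift_two_power]
  obtain ⟨μ, hμ⟩ := Cardinal.mem_range_lift_of_le h𝒜κ
  exact ⟨μ, hμ.symm⟩

theorem dClubNum_le_of_isBase {κ : Ordinal.{0}} (hκ : Order.IsSuccPrelimit κ)
    {U ℬ : Set (Set Ordinal)} (hUκ : ∀ A ∈ U, A ⊆ Set.Iio κ) (hUunif : Uniform κ U)
    (hclub : ∀ C, IsClub κ C → C ∈ U) (hℬ : IsBase κ U ℬ) {μ : Cardinal.{0}}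
    (hμ : #ℬ = Cardinal.lift.{1} μ) : dClubNum κ ≤ μ := by
  have hcard : #(ClIn κ '' ℬ) ≤ Cardinal.lift.{1} μ := hμ ▸ Cardinal.mk_image_le
  obtain ⟨ν, hν⟩ := Cardinal.mem_range_lift_of_le hcard
  have hνμ : ν ≤ μ := Cardinal.lift_le.{1}.mp (hν ▸ hcard)
  refine le_trans (csInf_le' (show ν ∈ _ from ⟨ClIn κ '' ℬ, ?_, fun C hC => ?_, hν.symm⟩)) hνμ
  · rintro _ ⟨B, hB, rfl⟩
    exact isClub_clIn (hUκ B (hℬ.1 hB)) (hUunif B (hℬ.1 hB))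
  · obtain ⟨B, hB, hBC⟩ := hℬ.exists_clIn_almostSub hκ hclub hC
    exact ⟨ClIn κ B, ⟨B, hB, rfl⟩, hBC⟩

theorem dClubNum_le_chNum {κ : Ordinal.{0}} (hκ : Order.IsSuccPrelimit κ)
    {U ℬ : Set (Set Ordinal)} (hUκ : ∀ A ∈ U, A ⊆ Set.Iio κ) (hUunif : Uniform κ U)
    (hclub : ∀ C, IsClub κ C → C ∈ U) (hℬ : IsBase κ U ℬ) : dClubNum κ ≤ chNum κ U := by
  obtain ⟨μ, hμ⟩ := exists_mk_eq_lift_of_subset_Iio fun B hB => hUκ B (hℬ.1 hB)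
  refine le_csInf ⟨μ, ℬ, hℬ, hμ⟩ ?_
  rintro ν ⟨ℬ', hℬ', hν⟩
  exact dClubNum_le_of_isBase hκ hUκ hUunif hclub hℬ' hν

theorem stmt4_general (κ : Cardinal.{0}) (hreg : κ.IsRegular)
    (U : Set (Set Ordinal)) (hU : NormalUF κ.ord U)
    (ℬ : Set (Set Ordinal)) (hB : IsBase κ.ord U ℬ) :
    (∀ C, IsClub κ.ord C → ∃ B ∈ ℬ, AlmostSub κ.ord (ClIn κ.ord B) C) ∧
    dClubNum κ.ord ≤ chNum κ.ord U := by
  obtain ⟨hUfilter, hUunif, -, hclub, -⟩ := hU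
  have hκ : Order.IsSuccPrelimit κ.ord := (Cardinal.isSuccLimit_ord hreg.aleph0_le).isSuccPrelimit
  exact ⟨fun C hC => hB.exists_clIn_almostSub hκ hclub hC,
    dClubNum_le_chNum hκ hUfilter.subset hUunif hclub hB⟩

/-- if `U` is a normal ultrafilter on a measurable `κ` and `ℬ` is a base
for `U`, then the closures of members of `ℬ` form a base for the club filter under
`⊆*`; consequently `𝔡_κ ≤ ch(U)`. -/
theorem stmt4 (κ : Cardinal.{0}) (hreg : κ.IsRegular) (hunc : Cardinal.aleph0 < κ)
    (U : Set (Set Ordinal)) (hU : NormalUF κ.ord U)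
    (ℬ : Set (Set Ordinal)) (hB : IsBase κ.ord U ℬ) :
    (∀ C, IsClub κ.ord C → ∃ B ∈ ℬ, AlmostSub κ.ord (ClIn κ.ord B) C) ∧
    dClubNum κ.ord ≤ chNum κ.ord U :=
  stmt4_general κ hreg U hU ℬ hB

end PaperFormal
end

section
/- Let κ be a regular uncountable cardinal. If W is a uniform ultrafilter on κ such that no function f : κ → κ that is almost one-to-one modulo W is regressive on a set in W, then W extends the club filter on κ. -/
open Cardinal Set

namespace PaperFormal

/-- if `W` is a uniform ultrafilter on regular uncountable `κ` and no
function almost one-to-one modulo `W` is regressive on a set in `W`, then `W` extends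
the club filter. -/
theorem stmt8 (κ : Cardinal.{0}) (hreg : κ.IsRegular) (hunc : Cardinal.aleph0 < κ)
    (W : Set (Set Ordinal)) (hW : IsKUltrafilter κ.ord W) (huni : Uniform κ.ord W)
    (h : ∀ f : Ordinal → Ordinal, FunOn κ.ord f → AlmostInjMod κ.ord W f →
      ¬ ∃ A ∈ W, ∀ β ∈ A, β ≠ 0 → f β < β) :
    ∀ C, IsClub κ.ord C → C ∈ W := by
  intro C hC
  rcases hW.decide C hC.1 with hmem | hcomp
  · exact hmem
  exfalso
  obtain ⟨hCsub, hCunb, hCcl⟩ := hC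
  have hlim : Order.IsSuccLimit κ.ord := Cardinal.isSuccLimit_ord hunc.le
  set f : Ordinal → Ordinal := fun β => sSup (C ∩ Set.Iio β) with hf
  have hle : ∀ β, f β ≤ β := by
    intro β
    exact csSup_le' (fun x hx => (hx.2).le)
  have hsupmem : ∀ β, β < κ.ord → β ≠ 0 → f β = β → β ∈ C := by
    intro β hβ hβ0 hsup
    apply hCcl β hβ hβ0
    intro γ hγ
    by_contra hne
    have hub : ∀ x ∈ C ∩ Set.Iio β, x ≤ γ := by
      intro x hx
      by_contra hxg
      push_neg at hxg
      exact hne ⟨x, hx.1, hxg, hx.2⟩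
    have : f β ≤ γ := csSup_le' hub
    rw [hsup] at this
    exact absurd this (not_le.mpr hγ)
  have hFun : FunOn κ.ord f := fun β hβ => lt_of_le_of_lt (hle β) hβ
  have hInj : AlmostInjMod κ.ord W f := by
    refine ⟨Set.Iio κ.ord, hW.univ_mem, ?_⟩
    intro γ hγ
    obtain ⟨c, hcC, hcγ⟩ := hCunb (γ + 1) (hlim.add_one_lt hγ)
    have hcκ : c < κ.ord := hCsub hcC
    refine ⟨c + 1, hlim.add_one_lt hcκ, ?_⟩
    intro β hβ hfβ
    by_contra hβc
    push_neg at hβc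
    have hcβ : c < β := lt_of_lt_of_le (lt_add_one c) hβc
    have hbdd : BddAbove (C ∩ Set.Iio β) := ⟨β, fun x hx => hx.2.le⟩
    have : c ≤ f β := le_csSup hbdd ⟨hcC, hcβ⟩
    rw [hfβ] at this
    exact absurd (lt_of_lt_of_le (lt_of_lt_of_le (lt_add_one γ) hcγ) this)
      (lt_irrefl γ)
  apply h f hFun hInj
  refine ⟨Set.Iio κ.ord \ C, hcomp, ?_⟩
  intro β hβ hβ0
  rcases lt_or_eq_of_le (hle β) with hlt | heq
  · exact hlt
  · exact absurd (hsupmem β hβ.1 hβ0 heq) hβ.2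

end PaperFormal
end

section
/- Every countably complete uniform ultrafilter U on a regular uncountable cardinal κ is Rudin–Blass above an ultrafilter extending the club filter: there exists f : κ → κ almost one-to-one modulo U such that the pushforward f_*(U) extends Cub_κ. -/
open Cardinal Set

namespace PaperFormal

/-!
Suppose no such `f` exists. Then every function `f` mapping `κ` into `κ` and tending to `κ`
(such an `f` is bounded-to-one) misses some club `C` on a `U`-large set. Sending `β` to
`sup (C ∩ f β)` gives another such function, which lies in the closed set `C`, hence strictly
below `f β` wherever `f β ∉ C`. Iterating from the identity produces a sequence `f₀, f₁, …` with
`fₙ₊₁ < fₙ` on `U`-large sets; by countable completeness all these sets share a point `β`, and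
`fₙ β` is then an infinite descending sequence of ordinals.
-/

def TendsToTop (κ : Ordinal.{0}) (f : Ordinal → Ordinal) : Prop :=
  FunOn κ f ∧ ∀ α < κ, ∃ β₀ < κ, ∀ β, β₀ ≤ β → β < κ → α ≤ f β

lemma ClosedIn.csSup_mem {κ : Ordinal.{0}} {C S : Set Ordinal} (hC : ClosedIn κ C)
    (hSC : S ⊆ C) (hne : S.Nonempty) (hbdd : BddAbove S) (hlt : sSup S < κ) : sSup S ∈ C := by
  by_cases hmem : sSup S ∈ S
  · exact hSC hmem
  have hpos : sSup S ≠ 0 := by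
    obtain ⟨c, hc⟩ := hne
    intro h0
    have hc0 : c = 0 := nonpos_iff_eq_zero.1 (h0 ▸ le_csSup hbdd hc)
    exact hmem (h0 ▸ hc0 ▸ hc)
  refine hC _ hlt hpos fun δ hδ => ?_
  obtain ⟨c, hc, hδc⟩ := exists_lt_of_lt_csSup hne hδ
  exact ⟨c, hSC hc, hδc, (le_csSup hbdd hc).lt_of_ne fun h => hmem (h ▸ hc)⟩

lemma ClosedIn.csSup_inter_Iio_lt {κ γ : Ordinal.{0}} {C : Set Ordinal} (hC : ClosedIn κ C)
    (hγ : γ < κ) (hγC : γ ∉ C) (hne : (C ∩ Set.Iio γ).Nonempty) :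
    sSup (C ∩ Set.Iio γ) < γ :=
  have hle : sSup (C ∩ Set.Iio γ) ≤ γ := csSup_le' fun _ hc => hc.2.le
  hle.lt_of_ne fun h => hγC <| h ▸
    hC.csSup_mem Set.inter_subset_left hne (bddAbove_Iio.mono Set.inter_subset_right)
      (hle.trans_lt hγ)

lemma IsKUltrafilter.diff_Iio_mem {κ β : Ordinal.{0}} {U : Set (Set Ordinal)}
    (hU : IsKUltrafilter κ U) (huni : Uniform κ U) (hβ : β < κ) : Set.Iio κ \ Set.Iio β ∈ U :=
  (hU.decide _ fun _ h => h.trans hβ).resolve_left fun h =>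
    have ⟨_, hγ, hle⟩ := huni _ h β hβ
    hle.not_gt hγ

lemma CountablyComplete.iInter_mem {U : Set (Set Ordinal)} (hcc : CountablyComplete U)
    {A : ℕ → Set Ordinal} (hA : ∀ n, A n ∈ U) : ⋂ n, A n ∈ U := by
  rw [← Set.sInter_range]
  exact hcc _ (Set.range_subset_iff.2 hA) (Set.countable_range A) (Set.range_nonempty A)

namespace TendsToTop

variable {κ : Ordinal.{0}} {f : Ordinal → Ordinal}

protected lemma id : TendsToTop κ id :=
  ⟨fun _ h => h, fun α hα => ⟨α, hα, fun _ h _ => h⟩⟩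

lemma almostInjMod (hκ : Order.IsSuccLimit κ) {U : Set (Set Ordinal)} (hU : Set.Iio κ ∈ U)
    (hf : TendsToTop κ f) : AlmostInjMod κ U f := by
  refine ⟨Set.Iio κ, hU, fun γ hγ => ?_⟩
  obtain ⟨β₀, hβ₀, h⟩ := hf.2 (Order.succ γ) (hκ.succ_lt hγ)
  exact ⟨β₀, hβ₀, fun β hβ hfβ => not_le.1 fun hle => (Order.lt_succ γ).not_ge (hfβ ▸ h β hle hβ)⟩

lemma csSup_inter_Iio (hκ : Order.IsSuccLimit κ) {C : Set Ordinal} (hC : IsClub κ C)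
    (hf : TendsToTop κ f) : TendsToTop κ fun β => sSup (C ∩ Set.Iio (f β)) := by
  refine ⟨fun β hβ => (csSup_le' fun _ hc => hc.2.le).trans_lt (hf.1 β hβ), fun α hα => ?_⟩
  obtain ⟨c, hcC, hαc⟩ := hC.2.1 α hα
  obtain ⟨β₀, hβ₀, h⟩ := hf.2 (Order.succ c) (hκ.succ_lt (hC.1 hcC))
  exact ⟨β₀, hβ₀, fun β h₀ hβ => hαc.trans <| le_csSup (bddAbove_Iio.mono Set.inter_subset_right)
    ⟨hcC, Order.succ_le_iff.1 (h β h₀ hβ)⟩⟩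

lemma exists_lt_of_notMem_pushFwd (hκ : Order.IsSuccLimit κ) {U : Set (Set Ordinal)}
    (hU : IsKUltrafilter κ U) (huni : Uniform κ U) (hf : TendsToTop κ f) {C : Set Ordinal}
    (hC : IsClub κ C) (hCf : C ∉ PushFwd κ f U) :
    ∃ g, TendsToTop κ g ∧ Set.Iio κ ∩ {β | g β < f β} ∈ U := by
  refine ⟨_, hf.csSup_inter_Iio hκ hC, ?_⟩
  have hmiss : Set.Iio κ \ (Set.Iio κ ∩ f ⁻¹' C) ∈ U :=
    (hU.decide _ Set.inter_subset_left).resolve_left fun h => hCf ⟨hC.1, h⟩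
  obtain ⟨c, hcC, -⟩ := hC.2.1 0 hκ.bot_lt
  obtain ⟨β₀, hβ₀, h⟩ := hf.2 (Order.succ c) (hκ.succ_lt (hC.1 hcC))
  refine hU.upward _ (hU.inter _ hmiss _ (hU.diff_Iio_mem huni hβ₀)) _ Set.inter_subset_left ?_
  rintro β ⟨⟨hβ, hfβ⟩, -, hβ₀β⟩
  have hc : c < f β := Order.succ_le_iff.1 (h β (not_lt.1 hβ₀β) hβ)
  exact ⟨hβ, hC.2.2.csSup_inter_Iio_lt (hf.1 β hβ) (fun h => hfβ ⟨hβ, h⟩) ⟨c, hcC, hc⟩⟩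

end TendsToTop

theorem stmt9_general (κ : Cardinal.{0}) (hreg : κ.IsRegular)
    (U : Set (Set Ordinal)) (hU : IsKUltrafilter κ.ord U) (huni : Uniform κ.ord U)
    (hcc : CountablyComplete U) :
    ∃ f : Ordinal → Ordinal, FunOn κ.ord f ∧ AlmostInjMod κ.ord U f ∧
      ∀ C, IsClub κ.ord C → C ∈ PushFwd κ.ord f U := by
  have hκ : Order.IsSuccLimit κ.ord := Cardinal.isSuccLimit_ord hreg.aleph0_le
  by_contra! hcon
  have step : ∀ f : {f // TendsToTop κ.ord f}, ∃ g : {g // TendsToTop κ.ord g},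
      Set.Iio κ.ord ∩ {β | g.1 β < f.1 β} ∈ U := by
    rintro ⟨f, hf⟩
    obtain ⟨C, hC, hCf⟩ := hcon f hf.1 (hf.almostInjMod hκ hU.univ_mem)
    obtain ⟨g, hg, hgf⟩ := hf.exists_lt_of_notMem_pushFwd hκ hU huni hC hCf
    exact ⟨⟨g, hg⟩, hgf⟩
  choose next hnext using step
  let F (n : ℕ) : Ordinal → Ordinal := (next^[n] ⟨id, .id⟩).1
  have hdesc : ⋂ n, Set.Iio κ.ord ∩ {β | F (n + 1) β < F n β} ∈ U :=
    hcc.iInter_mem fun n => by simpa only [F, Function.iterate_succ_apply'] using hnext _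
  obtain ⟨β, hβ⟩ := Set.nonempty_iff_ne_empty.2 fun h => hU.proper (h ▸ hdesc)
  exact not_strictAnti_of_wellFoundedLT (fun n => F n β)
    (strictAnti_nat_of_succ_lt fun n => (Set.mem_iInter.1 hβ n).2)

/-- every countably complete uniform ultrafilter `U` on regular
uncountable `κ` is Rudin–Blass above an ultrafilter extending the club filter. -/
theorem stmt9 (κ : Cardinal.{0}) (hreg : κ.IsRegular) (hunc : Cardinal.aleph0 < κ)
    (U : Set (Set Ordinal)) (hU : IsKUltrafilter κ.ord U) (huni : Uniform κ.ord U)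
    (hcc : CountablyComplete U) :
    ∃ f : Ordinal → Ordinal, FunOn κ.ord f ∧ AlmostInjMod κ.ord U f ∧
      ∀ C, IsClub κ.ord C → C ∈ PushFwd κ.ord f U :=
  stmt9_general κ hreg U hU huni hcc

end PaperFormal
end

section
/- For any uniform ultrafilter U on a regular uncountable cardinal κ: (1) πch(U) ≥ 𝔯_κ; and (2) π𝔭(U) ≤ 𝔰_κ, where π𝔭(U) is the least λ such that some family of λ sets in U has no pseudo-intersection in [κ]^κ. -/
/-!
If `A ⊆ κ`, one of `A` and `κ \ A` belongs to the ultrafilter `U`, and no set almost contained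
in that member is split by `A`. Hence a π-base of `U` is an unsplittable family, so `𝔯_κ ≤ πch(U)`;
and replacing every member of a splitting family by its side in `U` gives a subfamily of `U`
of no larger size without a pseudo-intersection, so `π𝔭(U) ≤ 𝔰_κ`.

Splitting families exist (so `𝔰_κ` is not the junk value `sInf ∅ = 0`): an unbounded subset of a
regular `κ` has size `κ`, so it is the union of two disjoint sets of size `κ`, which are unbounded
again.
-/

open Cardinal Set

theorem Cardinal.exists_compl_mk_eq_mk {α : Type*} [Infinite α] :
    ∃ s : Set α, #s = #α ∧ #(sᶜ : Set α) = #α := by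
  obtain ⟨e⟩ : Nonempty (α ⊕ α ≃ α) := Cardinal.eq.1 (by simp [Cardinal.add_eq_self])
  refine ⟨range (e ∘ Sum.inl), ?_, ?_⟩
  · exact mk_range_eq _ (e.injective.comp Sum.inl_injective)
  · rw [range_comp, ← e.image_compl, Set.compl_range_inl, ← range_comp]
    exact mk_range_eq _ (e.injective.comp Sum.inr_injective)

theorem Set.Infinite.exists_subset_mk_eq_mk_sdiff {α : Type*} {X : Set α} (hX : X.Infinite) :
    ∃ A ⊆ X, #A = #X ∧ #(X \ A : Set α) = #X := by
  have : Infinite X := hX.to_subtype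
  obtain ⟨s, hs, hsc⟩ := Cardinal.exists_compl_mk_eq_mk (α := X)
  refine ⟨Subtype.val '' s, Subtype.coe_image_subset X s, ?_, ?_⟩
  · rwa [mk_image_eq Subtype.val_injective]
  · rwa [← Set.image_val_compl, mk_image_eq Subtype.val_injective]

namespace PaperFormal

section

variable {κ : Ordinal.{0}} {U ℬ : Set (Set Ordinal)} {A C X Y : Set Ordinal}

theorem UnboundedIn.mono (hX : UnboundedIn κ X) (h : X ⊆ Y) :
    UnboundedIn κ Y := fun α hα ↦ (hX α hα).imp fun _ ⟨hβ, hαβ⟩ ↦ ⟨h hβ, hαβ⟩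

theorem AlmostSub.not_unboundedIn_sdiff (h : AlmostSub κ Y C) : ¬ UnboundedIn κ (Y \ C) := by
  obtain ⟨α, hα, hsub⟩ := h
  intro hunb
  obtain ⟨β, ⟨hβY, hβC⟩, hαβ⟩ := hunb α hα
  exact hβC (hsub β hβY hαβ)

theorem IsKFilter.pos (hU : IsKFilter κ U) : 0 < κ := by
  by_contra! h
  exact hU.proper (by simpa [nonpos_iff_eq_zero.1 h] using hU.univ_mem)

theorem IsKUltrafilter.exists_mem_forall_not_splits (hU : IsKUltrafilter κ U)
    (hA : A ⊆ Iio κ) : ∃ C ∈ U, ∀ Y, AlmostSub κ Y C → ¬ Splits κ A Y := by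
  rcases hU.decide A hA with hAU | hAU
  · exact ⟨A, hAU, fun Y hY hsplit ↦ hY.not_unboundedIn_sdiff hsplit.2⟩
  · refine ⟨Iio κ \ A, hAU, fun Y hY hsplit ↦ hY.not_unboundedIn_sdiff (hsplit.1.mono ?_)⟩
    exact fun β ⟨hβY, hβA⟩ ↦ ⟨hβY, fun h ↦ h.2 hβA⟩

theorem exists_lift_eq_mk_of_subset_powerset (h : ℬ ⊆ 𝒫 Iio κ) :
    ∃ μ : Cardinal.{0}, lift.{1} μ = #ℬ := by
  refine mem_range_lift_of_le (a := 2 ^ κ.card) ((mk_le_mk_of_subset h).trans_eq ?_)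
  rw [mk_powerset, mk_Iio_ordinal, ← lift_two_power]

theorem isPiBase_self (hU : IsKUltrafilter κ U) (huni : Uniform κ U) : IsPiBase κ U U :=
  ⟨fun B hB ↦ ⟨hU.subset B hB, huni B hB⟩,
    fun A hA ↦ ⟨A, hA, 0, hU.pos, fun _ hβ _ ↦ hβ⟩⟩

theorem IsPiBase.not_exists_splits (hU : IsKUltrafilter κ U) (hℬ : IsPiBase κ U ℬ) :
    ¬ ∃ X, X ⊆ Iio κ ∧ ∀ B ∈ ℬ, Splits κ X B := by
  rintro ⟨X, hX, hsplit⟩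
  obtain ⟨C, hCU, hC⟩ := hU.exists_mem_forall_not_splits hX
  obtain ⟨B, hB, hBC⟩ := hℬ.2 C hCU
  exact hC B hBC (hsplit B hB)

theorem rNum_le_piChNum (hU : IsKUltrafilter κ U) (huni : Uniform κ U) :
    rNum κ ≤ piChNum κ U := by
  obtain ⟨μ, hμ⟩ := exists_lift_eq_mk_of_subset_powerset hU.subset
  refine csInf_le_csInf (OrderBot.bddBelow _) ⟨μ, U, isPiBase_self hU huni, hμ.symm⟩ ?_
  rintro μ ⟨ℬ, hℬ, hμ⟩
  exact ⟨ℬ, hℬ.1, hℬ.not_exists_splits hU, hμ⟩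

theorem piPNum_le_of_forall_splits (hU : IsKUltrafilter κ U) {𝒜 : Set (Set Ordinal)}
    (h𝒜 : ∀ A ∈ 𝒜, A ⊆ Iio κ)
    (h𝒜split : ∀ X, X ⊆ Iio κ → UnboundedIn κ X → ∃ A ∈ 𝒜, Splits κ A X)
    {μ : Cardinal.{0}} (hμ : #𝒜 = lift.{1} μ) : piPNum κ U ≤ μ := by
  choose C hCU hC using fun A : 𝒜 ↦ hU.exists_mem_forall_not_splits (h𝒜 A A.2)
  have hcard : #(range C) ≤ lift.{1} μ := mk_range_le.trans hμ.le
  obtain ⟨ν, hν⟩ := mem_range_lift_of_le hcard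
  calc piPNum κ U ≤ ν := csInf_le' ⟨range C, range_subset_iff.2 hCU, hν.symm, ?_⟩
    _ ≤ μ := lift_le.1 (hν ▸ hcard)
  rintro ⟨Y, hY, hYu, hYC⟩
  obtain ⟨A, hA, hsplit⟩ := h𝒜split Y hY hYu
  exact hC ⟨A, hA⟩ Y (hYC _ (mem_range_self _)) hsplit

end

section Regular

variable {κ : Cardinal.{0}} {X : Set Ordinal}

theorem unboundedIn_ord_of_lift_le_mk (h : lift.{1} κ ≤ #X) : UnboundedIn κ.ord X := by
  intro α hα
  by_contra! hX
  have hXα : #X ≤ lift.{1} α.card :=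
    (mk_le_mk_of_subset fun β hβ ↦ hX β hβ).trans_eq (mk_Iio_ordinal α)
  exact (h.trans hXα).not_gt (lift_lt.2 (lt_ord.1 hα))

theorem lift_le_mk_of_unboundedIn_ord (hκ : κ.IsRegular) (hX : X ⊆ Iio κ.ord)
    (hXu : UnboundedIn κ.ord X) : lift.{1} κ ≤ #X := by
  by_contra! h
  have hsup : sSup X < κ.ord :=
    Ordinal.sSup_lt_of_lt_cof (by rwa [← Ordinal.lift_cof, hκ.cof_ord]) hX
  obtain ⟨β, hβ, hle⟩ := hXu (Order.succ (sSup X)) ((isSuccLimit_ord hκ.aleph0_le).succ_lt hsup)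
  exact (Order.succ_le_iff.1 hle).not_ge (le_csSup ⟨κ.ord, fun _ h ↦ (hX h).le⟩ hβ)

theorem exists_splits_of_isRegular (hκ : κ.IsRegular) (hX : X ⊆ Iio κ.ord)
    (hXu : UnboundedIn κ.ord X) : ∃ A ⊆ Iio κ.ord, Splits κ.ord A X := by
  have hκX := lift_le_mk_of_unboundedIn_ord hκ hX hXu
  have hinf : X.Infinite := infinite_coe_iff.1 <| infinite_iff.2 <|
    (by simpa using hκ.aleph0_le : ℵ₀ ≤ lift.{1} κ).trans hκX
  obtain ⟨A, hAX, hA, hXA⟩ := hinf.exists_subset_mk_eq_mk_sdiff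
  refine ⟨A, hAX.trans hX, ?_, unboundedIn_ord_of_lift_le_mk (hκX.trans_eq hXA.symm)⟩
  rw [inter_eq_right.2 hAX]
  exact unboundedIn_ord_of_lift_le_mk (hκX.trans_eq hA.symm)

theorem piPNum_le_sNum (hκ : κ.IsRegular) {U : Set (Set Ordinal)}
    (hU : IsKUltrafilter κ.ord U) : piPNum κ.ord U ≤ sNum κ.ord := by
  obtain ⟨μ, hμ⟩ := exists_lift_eq_mk_of_subset_powerset (subset_refl (𝒫 Iio κ.ord))
  refine le_csInf ⟨μ, 𝒫 Iio κ.ord, fun _ h ↦ h,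
    fun _ hX hXu ↦ exists_splits_of_isRegular hκ hX hXu, hμ.symm⟩ ?_
  rintro ν ⟨𝒜, h𝒜, h𝒜split, hν⟩
  exact piPNum_le_of_forall_splits hU h𝒜 h𝒜split hν

end Regular

theorem stmt11_general (κ : Cardinal.{0}) (hreg : κ.IsRegular)
    (U : Set (Set Ordinal)) (hU : IsKUltrafilter κ.ord U) (huni : Uniform κ.ord U) :
    rNum κ.ord ≤ piChNum κ.ord U ∧ piPNum κ.ord U ≤ sNum κ.ord :=
  ⟨rNum_le_piChNum hU huni, piPNum_le_sNum hreg hU⟩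

/-- for any uniform ultrafilter `U` on regular uncountable `κ`,
`πch(U) ≥ 𝔯_κ` and `π𝔭(U) ≤ 𝔰_κ`. -/
theorem stmt11 (κ : Cardinal.{0}) (hreg : κ.IsRegular) (hunc : Cardinal.aleph0 < κ)
    (U : Set (Set Ordinal)) (hU : IsKUltrafilter κ.ord U) (huni : Uniform κ.ord U) :
    rNum κ.ord ≤ piChNum κ.ord U ∧ piPNum κ.ord U ≤ sNum κ.ord :=
  stmt11_general κ hreg U hU huni

end PaperFormal
end

section
/- In the same setting (an increasing λ-chain of subalgebras P_i covering P(κ), ultrafilters 𝒰_i on P_i, and diagonalizing sets k_i ∈ [κ]^κ with k_i ⊆* X for all X ∈ 𝒰_i), the reaping number satisfies 𝔯_κ ≤ cf(λ): if {α_i : i < cf(λ)} is cofinal in λ, then {k_{α_i} : i < cf(λ)} is an unsplittable family. -/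
open Cardinal Set

namespace PaperFormal

/-!
If `X` split `k (c i)` for every `i`, pick `j` with `X ∈ P j` and a cofinal index `c i ≥ j`.
Then `X ∈ P (c i)`, so `𝒰 (c i)` contains `X` or its complement, and `k (c i)` is almost
contained in that set; either way `X` cannot split `k (c i)`.
-/

theorem not_splits_of_almostSub {κ : Ordinal.{0}} {X B : Set Ordinal}
    (h : AlmostSub κ B X) : ¬ Splits κ X B := by
  rintro ⟨-, hout⟩
  obtain ⟨α, hα, hB⟩ := h
  obtain ⟨β, ⟨hβB, hβX⟩, hαβ⟩ := hout α hα
  exact hβX (hB β hβB hαβ)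

theorem not_splits_of_almostSub_diff {κ : Ordinal.{0}} {C X B : Set Ordinal}
    (h : AlmostSub κ B (C \ X)) : ¬ Splits κ X B := by
  rintro ⟨hin, -⟩
  obtain ⟨α, hα, hB⟩ := h
  obtain ⟨β, ⟨hβB, hβX⟩, hαβ⟩ := hin α hα
  exact (hB β hβB hαβ).2 hβX

theorem not_splits_of_mem_or_diff_mem {κ : Ordinal.{0}} {U : Set (Set Ordinal)}
    {X B : Set Ordinal}
    (hX : X ∈ U ∨ Iio κ \ X ∈ U) (hB : ∀ Y ∈ U, AlmostSub κ B Y) : ¬ Splits κ X B :=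
  hX.elim (fun h => not_splits_of_almostSub (hB X h))
    (fun h => not_splits_of_almostSub_diff (hB _ h))

theorem rNum_le_of_unsplittable {κ : Ordinal.{0}} {μ : Cardinal.{0}} {𝒜 : Set (Set Ordinal)}
    (h𝒜 : ∀ A ∈ 𝒜, A ⊆ Iio κ ∧ UnboundedIn κ A)
    (hunsplit : ¬ ∃ X, X ⊆ Iio κ ∧ ∀ A ∈ 𝒜, Splits κ X A)
    (hcard : #𝒜 ≤ Cardinal.lift.{1} μ) : rNum κ ≤ μ := by
  obtain ⟨ν, hν⟩ := Cardinal.mem_range_lift_of_le hcard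
  have hνμ : ν ≤ μ := by rwa [← Cardinal.lift_le.{1}, hν]
  have hν_mem : ν ∈ {μ : Cardinal.{0} | ∃ 𝒜 : Set (Set Ordinal),
      (∀ A ∈ 𝒜, A ⊆ Iio κ ∧ UnboundedIn κ A) ∧
      (¬ ∃ X, X ⊆ Iio κ ∧ ∀ A ∈ 𝒜, Splits κ X A) ∧ #𝒜 = Cardinal.lift.{1} μ} :=
    ⟨𝒜, h𝒜, hunsplit, hν.symm⟩
  exact (csInf_le' hν_mem).trans hνμ

theorem stmt14_general (κ lam : Cardinal.{0})
    (P : Ordinal → Set (Set Ordinal)) (𝒰 : Ordinal → Set (Set Ordinal))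
    (k : Ordinal → Set Ordinal)
    (hPmono : ∀ i j, i ≤ j → j < lam.ord → P i ⊆ P j)
    (hPunion : ∀ A, A ⊆ Set.Iio κ.ord → ∃ i < lam.ord, A ∈ P i)
    (hUdec : ∀ i < lam.ord, ∀ A ∈ P i, A ∈ 𝒰 i ∨ Set.Iio κ.ord \ A ∈ 𝒰 i)
    (hk : ∀ i < lam.ord, k i ⊆ Set.Iio κ.ord ∧ UnboundedIn κ.ord (k i) ∧
      ∀ X ∈ 𝒰 i, AlmostSub κ.ord (k i) X)
    (c : Ordinal → Ordinal)
    (hc1 : ∀ i < (lam.ord.cof).ord, c i < lam.ord)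
    (hc2 : ∀ j < lam.ord, ∃ i < (lam.ord.cof).ord, j ≤ c i) :
    (¬ ∃ X, X ⊆ Set.Iio κ.ord ∧ ∀ i < (lam.ord.cof).ord, Splits κ.ord X (k (c i))) ∧
    rNum κ.ord ≤ lam.ord.cof := by
  have unsplittable : ¬ ∃ X, X ⊆ Iio κ.ord ∧
      ∀ i < (lam.ord.cof).ord, Splits κ.ord X (k (c i)) := by
    rintro ⟨X, hXsub, hsplit⟩
    obtain ⟨j, hj, hXj⟩ := hPunion X hXsub
    obtain ⟨i, hi, hji⟩ := hc2 j hj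
    have hXci : X ∈ P (c i) := hPmono j (c i) hji (hc1 i hi) hXj
    exact not_splits_of_mem_or_diff_mem (hUdec (c i) (hc1 i hi) X hXci)
      (hk (c i) (hc1 i hi)).2.2 (hsplit i hi)
  refine ⟨unsplittable, rNum_le_of_unsplittable (𝒜 := (k ∘ c) '' Iio (lam.ord.cof).ord)
    ?_ ?_ ?_⟩
  · rintro A ⟨i, hi, rfl⟩
    exact ⟨(hk (c i) (hc1 i hi)).1, (hk (c i) (hc1 i hi)).2.1⟩
  · rintro ⟨X, hXsub, hsplit⟩
    exact unsplittable ⟨X, hXsub, fun i hi => hsplit _ ⟨i, hi, rfl⟩⟩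
  · calc #((k ∘ c) '' Iio (lam.ord.cof).ord) ≤ #(Iio (lam.ord.cof).ord) := mk_image_le
      _ = Cardinal.lift.{1} lam.ord.cof := by rw [Cardinal.mk_Iio_ordinal, card_ord]

/-- in the same setting, if `⟨c i : i < cf(λ)⟩` is cofinal in `λ`, the
family `{k (c i)}` is unsplittable; hence `𝔯_κ ≤ cf(λ)`. -/
theorem stmt14 (κ lam : Cardinal.{0}) (hreg : κ.IsRegular) (hunc : Cardinal.aleph0 < κ)
    (hlt : κ < lam)
    (P : Ordinal → Set (Set Ordinal)) (𝒰 : Ordinal → Set (Set Ordinal))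
    (k : Ordinal → Set Ordinal)
    (hPsub : ∀ i < lam.ord, ∀ A ∈ P i, A ⊆ Set.Iio κ.ord)
    (hPmono : ∀ i j, i ≤ j → j < lam.ord → P i ⊆ P j)
    (hPcompl : ∀ i < lam.ord, ∀ A ∈ P i, Set.Iio κ.ord \ A ∈ P i)
    (hPunion : ∀ A, A ⊆ Set.Iio κ.ord → ∃ i < lam.ord, A ∈ P i)
    (hUsub : ∀ i < lam.ord, 𝒰 i ⊆ P i)
    (hUdec : ∀ i < lam.ord, ∀ A ∈ P i, A ∈ 𝒰 i ∨ Set.Iio κ.ord \ A ∈ 𝒰 i)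
    (hk : ∀ i < lam.ord, k i ⊆ Set.Iio κ.ord ∧ UnboundedIn κ.ord (k i) ∧
      ∀ X ∈ 𝒰 i, AlmostSub κ.ord (k i) X)
    (c : Ordinal → Ordinal)
    (hc1 : ∀ i < (lam.ord.cof).ord, c i < lam.ord)
    (hc2 : ∀ j < lam.ord, ∃ i < (lam.ord.cof).ord, j ≤ c i) :
    (¬ ∃ X, X ⊆ Set.Iio κ.ord ∧ ∀ i < (lam.ord.cof).ord, Splits κ.ord X (k (c i))) ∧
    rNum κ.ord ≤ lam.ord.cof :=
  stmt14_general κ lam P 𝒰 k hPmono hPunion hUdec hk c hc1 hc2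

end PaperFormal
end
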